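/- Let n = n₁ · n₂ ⋯ n_r be a good factorization of the positive integer n. If n is stable, then every factor n_j is stable. -/

import Mathlib

open Real

/-- `Writes n k` means the positive integer `n` can be written using exactly `k` ones
combined by additions and multiplications. -/
inductive Writes : ℕ → ℕ → Prop
  | one : Writes 1 1
  | add {a b m n : ℕ} : Writes a m → Writes b n → Writes (a + b) (m + n)
  | mul {a b m n : ℕ} : Writes a m → Writes b n → Writes (a * b) (m + n)

/-- The integer complexity `‖n‖`: the least number of 1's needed to write `n`
using additions and multiplications. -/
noncomputable def cpx (n : ℕ) : ℕ := sInf {k | Writes n k}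

/-- The defect `δ(n) = ‖n‖ - 3 log₃ n`. -/
noncomputable def defect (n : ℕ) : ℝ := (cpx n : ℝ) - 3 * Real.logb 3 n

/-- A positive integer m is stable if ‖3^k·m‖ = 3k + ‖m‖ for all k ≥ 1. -/
def Stable (m : ℕ) : Prop :=
  ∀ k : ℕ, 1 ≤ k → cpx (3 ^ k * m) = 3 * k + cpx m

/-!
Multiplying by `3 ^ k` costs at most `3 k` ones, so only `‖3 ^ k n_j‖ ≥ 3 k + ‖n_j‖` needs proof.
Writing `3 ^ k n = (3 ^ k n_j) · ∏_{i ≠ j} n_i`, stability of `n` and goodness of the factorization give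
`3 k + ∑_i ‖n_i‖ = ‖3 ^ k n‖ ≤ ‖3 ^ k n_j‖ + ∑_{i ≠ j} ‖n_i‖`, and cancelling `∑_{i ≠ j} ‖n_i‖` is the claim.
-/

theorem writes_self : ∀ {n : ℕ}, 0 < n → Writes n n
  | 1, _ => Writes.one
  | n + 2, _ => (Writes.add (writes_self n.succ_pos) Writes.one : Writes (n + 1 + 1) (n + 1 + 1))

theorem writes_cpx {n : ℕ} (hn : 0 < n) : Writes n (cpx n) :=
  Nat.sInf_mem ⟨n, writes_self hn⟩

theorem cpx_le_of_writes {n k : ℕ} (h : Writes n k) : cpx n ≤ k :=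
  Nat.sInf_le h

theorem cpx_mul_le {a b : ℕ} (ha : 0 < a) (hb : 0 < b) : cpx (a * b) ≤ cpx a + cpx b :=
  cpx_le_of_writes (Writes.mul (writes_cpx ha) (writes_cpx hb))

theorem writes_three : Writes 3 3 :=
  Writes.add (Writes.add Writes.one Writes.one) Writes.one

theorem writes_three_pow : ∀ {k : ℕ}, 1 ≤ k → Writes (3 ^ k) (3 * k)
  | 1, _ => writes_three
  | k + 2, _ => by
    simpa [pow_succ, mul_add] using
      Writes.mul (writes_three_pow (k := k + 1) (Nat.le_add_left 1 k)) writes_three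

theorem cpx_three_pow_mul_le {k m : ℕ} (hk : 1 ≤ k) (hm : 0 < m) :
    cpx (3 ^ k * m) ≤ 3 * k + cpx m :=
  (cpx_mul_le (by positivity) hm).trans
    (Nat.add_le_add_right (cpx_le_of_writes (writes_three_pow hk)) _)

-- The extra factor `a` keeps the bound true for an empty product, where `cpx 1 = 1 > 0`.
theorem cpx_mul_prod_le {ι : Type*} (s : Finset ι) {f : ι → ℕ} (hf : ∀ i ∈ s, 0 < f i)
    {a : ℕ} (ha : 0 < a) : cpx (a * ∏ i ∈ s, f i) ≤ cpx a + ∑ i ∈ s, cpx (f i) := by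
  induction s using Finset.cons_induction generalizing a with
  | empty => simp
  | cons i s hi ih =>
    have hfi : 0 < f i := hf i (Finset.mem_cons_self i s)
    calc cpx (a * ∏ j ∈ Finset.cons i s hi, f j)
        = cpx (a * f i * ∏ j ∈ s, f j) := by rw [Finset.prod_cons, mul_assoc]
      _ ≤ cpx (a * f i) + ∑ j ∈ s, cpx (f j) :=
          ih (fun j hj => hf j (Finset.mem_cons_of_mem hj)) (Nat.mul_pos ha hfi)
      _ ≤ cpx a + cpx (f i) + ∑ j ∈ s, cpx (f j) := by gcongr; exact cpx_mul_le ha hfi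
      _ = cpx a + ∑ j ∈ Finset.cons i s hi, cpx (f j) := by rw [Finset.sum_cons, add_assoc]

/-- In a good factorization of a stable number, every factor is stable. -/
theorem stable_factors_of_good_factorization (r : ℕ) (f : Fin r → ℕ)
    (hf : ∀ i, 0 < f i) (n : ℕ) (hn : n = ∏ i, f i)
    (hgood : cpx n = ∑ i, cpx (f i)) (hS : Stable n) :
    ∀ j, Stable (f j) := by
  intro j k hk
  refine le_antisymm (cpx_three_pow_mul_le hk (hf j)) ?_
  have hsplit : 3 ^ k * n = 3 ^ k * f j * ∏ i ∈ {j}ᶜ, f i := by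
    rw [hn, Fintype.prod_eq_mul_prod_compl j f, mul_assoc]
  have hcpx : cpx n = cpx (f j) + ∑ i ∈ {j}ᶜ, cpx (f i) := by
    rw [hgood, Fintype.sum_eq_add_sum_compl j]
  have hlower : 3 * k + cpx n ≤ cpx (3 ^ k * f j) + ∑ i ∈ {j}ᶜ, cpx (f i) := by
    rw [← hS k hk, hsplit]
    exact cpx_mul_prod_le _ (fun i _ => hf i) (Nat.mul_pos (by positivity) (hf j))
  omega
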